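/- arXiv:1812.02952 — 2 statements merged into one kernel-verified Lean document; each statement's English description precedes it below -/
import Mathlib

section
/- Suppose f₁ and f₀ are ℓ1-Lipschitz with constants L₁ and L₀, and suppose L_AA2 := max over 0 ≤ Δ ≤ π ≤ 1 of [2·(π·L₁ + (1−π)·L₀) + |f₁(Δ, π−Δ) − f₀(Δ, π−Δ)|] satisfies L_AA2 < 1. For the joint AA2 discrete-time dynamics a_{t+1} = G_A(a_t, b_t), b_{t+1} = G_B(a_t, b_t) (with the roles of the two coordinates swapped at any step where b_t > a_t), one has |G_A(π,π′) − G_B(π,π′)| ≤ L_AA2·|π − π′| for all π ≥ π′ in [0,1]; consequently |a_t − b_t| ≤ L_AA2^t·|a₀ − b₀| → 0 as t → ∞, i.e., society equalizes under AA2. -/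
/-!
Write `Δ = π − π'`. The gap `G_A − G_B` splits as
`π·(f₁(0,π) − f₁(Δ,π')) + (1−π)·(f₀(0,π) − f₀(Δ,π')) + Δ·(f₁(Δ,π') − f₀(Δ,π'))`.
The points `(0,π)` and `(Δ,π')` are at ℓ1-distance `2Δ`, so the first two terms are at most
`2Δ·(π·L₁ + (1−π)·L₀)`, and the whole gap is at most `L_AA2·Δ`. Both maps keep `[0,1]`
invariant, so the one-step contraction iterates to `|a_t − b_t| ≤ L_AA2^t·|a₀ − b₀|`.
-/

open Set

def LipschitzOnUnitSquare (f : ℝ → ℝ → ℝ) (L : ℝ) : Prop :=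
  ∀ x₁ ∈ Icc (0:ℝ) 1, ∀ x₂ ∈ Icc (0:ℝ) 1, ∀ y₁ ∈ Icc (0:ℝ) 1, ∀ y₂ ∈ Icc (0:ℝ) 1,
    |f x₁ x₂ - f y₁ y₂| ≤ L * (|x₁ - y₁| + |x₂ - y₂|)

def MapsUnitSquareToIcc (f : ℝ → ℝ → ℝ) : Prop :=
  ∀ x ∈ Icc (0:ℝ) 1, ∀ y ∈ Icc (0:ℝ) 1, f x y ∈ Icc (0:ℝ) 1

def advantagedStep (f₀ f₁ : ℝ → ℝ → ℝ) (π : ℝ) : ℝ :=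
  π * f₁ 0 π + (1 - π) * f₀ 0 π

def disadvantagedStep (f₀ f₁ : ℝ → ℝ → ℝ) (π π' : ℝ) : ℝ :=
  π' * f₁ (π - π') π' + (1 - π') * f₀ (π - π') π'

lemma sub_mem_Icc_zero_one {p q : ℝ} (hq : 0 ≤ q) (hqp : q ≤ p) (hp : p ≤ 1) :
    p - q ∈ Icc (0:ℝ) 1 :=
  ⟨sub_nonneg.2 hqp, by linarith⟩

lemma mul_add_one_sub_mul_mem_Icc {p x y : ℝ} (hp : p ∈ Icc (0:ℝ) 1)
    (hx : x ∈ Icc (0:ℝ) 1) (hy : y ∈ Icc (0:ℝ) 1) : p * x + (1 - p) * y ∈ Icc (0:ℝ) 1 := by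
  simpa only [smul_eq_mul] using
    convex_Icc (0:ℝ) 1 hx hy hp.1 (sub_nonneg.2 hp.2) (add_sub_cancel p 1)

lemma abs_mul_add_one_sub_mul_sub_le {p q u v u' v' : ℝ} (hq : 0 ≤ q) (hqp : q ≤ p)
    (hp : p ≤ 1) :
    |p * u + (1 - p) * v - (q * u' + (1 - q) * v')|
      ≤ p * |u - u'| + (1 - p) * |v - v'| + (p - q) * |u' - v'| := by
  have hsplit : p * u + (1 - p) * v - (q * u' + (1 - q) * v')
      = p * (u - u') + (1 - p) * (v - v') + (p - q) * (u' - v') := by ring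
  calc |p * u + (1 - p) * v - (q * u' + (1 - q) * v')|
      ≤ |p * (u - u')| + |(1 - p) * (v - v')| + |(p - q) * (u' - v')| := by
        rw [hsplit]; exact abs_add_three _ _ _
    _ = p * |u - u'| + (1 - p) * |v - v'| + (p - q) * |u' - v'| := by
        rw [abs_mul, abs_mul, abs_mul, abs_of_nonneg (hq.trans hqp),
          abs_of_nonneg (sub_nonneg.2 hp), abs_of_nonneg (sub_nonneg.2 hqp)]

namespace LipschitzOnUnitSquare

variable {f : ℝ → ℝ → ℝ} {L : ℝ}

lemma nonneg (hf : LipschitzOnUnitSquare f L) : 0 ≤ L := by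
  have h := hf 0 unitInterval.zero_mem 0 unitInterval.zero_mem 0 unitInterval.zero_mem 1
    unitInterval.one_mem
  norm_num at h
  exact (abs_nonneg _).trans h

lemma abs_sub_shift_le (hf : LipschitzOnUnitSquare f L) {p q : ℝ} (hq : 0 ≤ q) (hqp : q ≤ p)
    (hp : p ≤ 1) : |f 0 p - f (p - q) q| ≤ 2 * L * (p - q) := by
  have h := hf 0 unitInterval.zero_mem p ⟨hq.trans hqp, hp⟩ (p - q)
    (sub_mem_Icc_zero_one hq hqp hp) q ⟨hq, hqp.trans hp⟩
  rw [zero_sub, abs_neg, abs_of_nonneg (sub_nonneg.2 hqp)] at h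
  linarith

end LipschitzOnUnitSquare

section Steps

variable {f₀ f₁ : ℝ → ℝ → ℝ}

lemma advantagedStep_mem_Icc (h₀ : MapsUnitSquareToIcc f₀) (h₁ : MapsUnitSquareToIcc f₁)
    {π : ℝ} (hπ : π ∈ Icc (0:ℝ) 1) : advantagedStep f₀ f₁ π ∈ Icc (0:ℝ) 1 :=
  mul_add_one_sub_mul_mem_Icc hπ (h₁ 0 unitInterval.zero_mem π hπ)
    (h₀ 0 unitInterval.zero_mem π hπ)

lemma disadvantagedStep_mem_Icc (h₀ : MapsUnitSquareToIcc f₀) (h₁ : MapsUnitSquareToIcc f₁)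
    {π π' : ℝ} (hπ : π ≤ 1) (hπ' : π' ∈ Icc (0:ℝ) 1) (hle : π' ≤ π) :
    disadvantagedStep f₀ f₁ π π' ∈ Icc (0:ℝ) 1 :=
  have hΔ := sub_mem_Icc_zero_one hπ'.1 hle hπ
  mul_add_one_sub_mul_mem_Icc hπ' (h₁ _ hΔ π' hπ') (h₀ _ hΔ π' hπ')

lemma abs_advantagedStep_sub_disadvantagedStep_le {L₀ L₁ c : ℝ}
    (h₀ : LipschitzOnUnitSquare f₀ L₀) (h₁ : LipschitzOnUnitSquare f₁ L₁)
    (hL : ∀ Δ π : ℝ, 0 ≤ Δ → Δ ≤ π → π ≤ 1 →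
      2 * (π * L₁ + (1 - π) * L₀) + |f₁ Δ (π - Δ) - f₀ Δ (π - Δ)| ≤ c)
    {π π' : ℝ} (hπ' : 0 ≤ π') (hle : π' ≤ π) (hπ : π ≤ 1) :
    |advantagedStep f₀ f₁ π - disadvantagedStep f₀ f₁ π π'| ≤ c * (π - π') := by
  have hΔ : 0 ≤ π - π' := sub_nonneg.2 hle
  have hmax := hL (π - π') π hΔ (sub_le_self π hπ') hπ
  rw [sub_sub_cancel] at hmax
  have hd₁ := mul_le_mul_of_nonneg_left (h₁.abs_sub_shift_le hπ' hle hπ) (hπ'.trans hle)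
  have hd₀ := mul_le_mul_of_nonneg_left (h₀.abs_sub_shift_le hπ' hle hπ) (sub_nonneg.2 hπ)
  have hgap := mul_le_mul_of_nonneg_left hmax hΔ
  calc _ ≤ π * |f₁ 0 π - f₁ (π - π') π'| + (1 - π) * |f₀ 0 π - f₀ (π - π') π'|
        + (π - π') * |f₁ (π - π') π' - f₀ (π - π') π'| :=
        abs_mul_add_one_sub_mul_sub_le hπ' hle hπ
    _ ≤ c * (π - π') := by linear_combination hd₁ + hd₀ + hgap

end Steps

lemma abs_sub_le_pow_mul_of_step {s : Set ℝ} {a b : ℕ → ℝ} {c : ℝ} (hc : 0 ≤ c)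
    (hstep : ∀ t, a t ∈ s → b t ∈ s →
      a (t + 1) ∈ s ∧ b (t + 1) ∈ s ∧ |a (t + 1) - b (t + 1)| ≤ c * |a t - b t|)
    (ha0 : a 0 ∈ s) (hb0 : b 0 ∈ s) (t : ℕ) : |a t - b t| ≤ c ^ t * |a 0 - b 0| := by
  have hmem : ∀ t, a t ∈ s ∧ b t ∈ s := fun t => by
    induction t with
    | zero => exact ⟨ha0, hb0⟩
    | succ t ih => exact ⟨(hstep t ih.1 ih.2).1, (hstep t ih.1 ih.2).2.1⟩
  induction t with
  | zero => simp
  | succ t ih =>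
    calc |a (t + 1) - b (t + 1)| ≤ c * |a t - b t| := (hstep t (hmem t).1 (hmem t).2).2.2
      _ ≤ c * (c ^ t * |a 0 - b 0|) := mul_le_mul_of_nonneg_left ih hc
      _ = c ^ (t + 1) * |a 0 - b 0| := by ring

lemma sorted_step_contracts {s : Set ℝ} {G H : ℝ → ℝ → ℝ} {c : ℝ}
    (hG : ∀ p ∈ s, ∀ q ∈ s, q ≤ p → G p q ∈ s) (hH : ∀ p ∈ s, ∀ q ∈ s, q ≤ p → H p q ∈ s)
    (hGH : ∀ p ∈ s, ∀ q ∈ s, q ≤ p → |G p q - H p q| ≤ c * |p - q|)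
    {x y : ℝ} (hx : x ∈ s) (hy : y ∈ s) :
    (if y ≤ x then G x y else H y x) ∈ s ∧ (if y ≤ x then H x y else G y x) ∈ s ∧
      |(if y ≤ x then G x y else H y x) - (if y ≤ x then H x y else G y x)| ≤ c * |x - y| := by
  by_cases hyx : y ≤ x
  · simp only [hyx, if_true]
    exact ⟨hG x hx y hy hyx, hH x hx y hy hyx, hGH x hx y hy hyx⟩
  · have hxy : x ≤ y := le_of_not_ge hyx
    simp only [hyx, if_false]
    rw [abs_sub_comm, abs_sub_comm x]
    exact ⟨hH y hy x hx hxy, hG y hy x hx hxy, hGH y hy x hx hxy⟩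

/-- society equalizes under AA2.
The AA2 one-step maps are `G_A(π,π') = π·f₁(0,π) + (1−π)·f₀(0,π)` (advantaged group) and
`G_B(π,π') = π'·f₁(π−π',π') + (1−π')·f₀(π−π',π')` (disadvantaged group), where `π ≥ π'`.
If `f₁`, `f₀` are ℓ1-Lipschitz with constants `L₁`, `L₀`, and
`L_AA2 := max_{0 ≤ Δ ≤ π ≤ 1} [2·(π·L₁ + (1−π)·L₀) + |f₁(Δ,π−Δ) − f₀(Δ,π−Δ)|] < 1`, then
`|G_A(π,π') − G_B(π,π')| ≤ L_AA2·|π − π'|` for all `π ≥ π'` in `[0,1]`, and for the joint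
trajectories (with the roles of the coordinates swapped at any step where `b_t > a_t`)
`|a_t − b_t| ≤ L_AA2^t·|a₀ − b₀| → 0`. -/
theorem AA2_equalizes
    (f₀ f₁ : ℝ → ℝ → ℝ) (L₀ L₁ LAA2 : ℝ)
    (hmap0 : ∀ x ∈ Set.Icc (0:ℝ) 1, ∀ y ∈ Set.Icc (0:ℝ) 1, f₀ x y ∈ Set.Icc (0:ℝ) 1)
    (hmap1 : ∀ x ∈ Set.Icc (0:ℝ) 1, ∀ y ∈ Set.Icc (0:ℝ) 1, f₁ x y ∈ Set.Icc (0:ℝ) 1)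
    (hlip1 : ∀ x₁ ∈ Set.Icc (0:ℝ) 1, ∀ x₂ ∈ Set.Icc (0:ℝ) 1,
        ∀ y₁ ∈ Set.Icc (0:ℝ) 1, ∀ y₂ ∈ Set.Icc (0:ℝ) 1,
        |f₁ x₁ x₂ - f₁ y₁ y₂| ≤ L₁ * (|x₁ - y₁| + |x₂ - y₂|))
    (hlip0 : ∀ x₁ ∈ Set.Icc (0:ℝ) 1, ∀ x₂ ∈ Set.Icc (0:ℝ) 1,
        ∀ y₁ ∈ Set.Icc (0:ℝ) 1, ∀ y₂ ∈ Set.Icc (0:ℝ) 1,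
        |f₀ x₁ x₂ - f₀ y₁ y₂| ≤ L₀ * (|x₁ - y₁| + |x₂ - y₂|))
    (hLAA2 : ∀ Δ π : ℝ, 0 ≤ Δ → Δ ≤ π → π ≤ 1 →
        2 * (π * L₁ + (1 - π) * L₀) + |f₁ Δ (π - Δ) - f₀ Δ (π - Δ)| ≤ LAA2)
    (hLAA2lt : LAA2 < 1)
    (GA GB : ℝ → ℝ → ℝ)
    (hGA : ∀ π π', GA π π' = π * f₁ 0 π + (1 - π) * f₀ 0 π)
    (hGB : ∀ π π', GB π π' = π' * f₁ (π - π') π' + (1 - π') * f₀ (π - π') π')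
    (a b : ℕ → ℝ)
    (ha0 : a 0 ∈ Set.Icc (0:ℝ) 1) (hb0 : b 0 ∈ Set.Icc (0:ℝ) 1)
    (ha : ∀ t, a (t + 1) = if b t ≤ a t then GA (a t) (b t) else GB (b t) (a t))
    (hb : ∀ t, b (t + 1) = if b t ≤ a t then GB (a t) (b t) else GA (b t) (a t)) :
    (∀ π ∈ Set.Icc (0:ℝ) 1, ∀ π' ∈ Set.Icc (0:ℝ) 1, π' ≤ π →
        |GA π π' - GB π π'| ≤ LAA2 * |π - π'|) ∧
    (∀ t, |a t - b t| ≤ LAA2 ^ t * |a 0 - b 0|) ∧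
    Filter.Tendsto (fun t => |a t - b t|) Filter.atTop (nhds 0) := by
  have hA : ∀ π π', GA π π' = advantagedStep f₀ f₁ π := hGA
  have hB : ∀ π π', GB π π' = disadvantagedStep f₀ f₁ π π' := hGB
  have hc : 0 ≤ LAA2 := by
    have h := hLAA2 0 1 le_rfl zero_le_one le_rfl
    norm_num at h
    linarith [LipschitzOnUnitSquare.nonneg hlip1, abs_nonneg (f₁ 0 1 - f₀ 0 1)]
  have hcontr : ∀ π ∈ Icc (0:ℝ) 1, ∀ π' ∈ Icc (0:ℝ) 1, π' ≤ π →
      |GA π π' - GB π π'| ≤ LAA2 * |π - π'| := fun π hπ π' hπ' hle => by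
    rw [hA, hB, abs_of_nonneg (sub_nonneg.2 hle)]
    exact abs_advantagedStep_sub_disadvantagedStep_le hlip0 hlip1 hLAA2 hπ'.1 hle hπ.2
  have hAmem : ∀ π ∈ Icc (0:ℝ) 1, ∀ π' ∈ Icc (0:ℝ) 1, π' ≤ π → GA π π' ∈ Icc (0:ℝ) 1 :=
    fun π hπ π' _ _ => hA π π' ▸ advantagedStep_mem_Icc hmap0 hmap1 hπ
  have hBmem : ∀ π ∈ Icc (0:ℝ) 1, ∀ π' ∈ Icc (0:ℝ) 1, π' ≤ π → GB π π' ∈ Icc (0:ℝ) 1 :=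
    fun π hπ π' hπ' hle => hB π π' ▸ disadvantagedStep_mem_Icc hmap0 hmap1 hπ.2 hπ' hle
  have hgeom : ∀ t, |a t - b t| ≤ LAA2 ^ t * |a 0 - b 0| :=
    abs_sub_le_pow_mul_of_step hc (fun t hat hbt => by
      rw [ha t, hb t]
      exact sorted_step_contracts hAmem hBmem hcontr hat hbt) ha0 hb0
  refine ⟨hcontr, hgeom, squeeze_zero (fun t => abs_nonneg _) hgeom ?_⟩
  simpa using (tendsto_pow_atTop_nhds_zero_of_lt_one hc hLAA2lt).mul_const |a 0 - b 0|
end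

section
/- Suppose the UN one-step map f is a k-equilibrium continuous-time dynamics with equilibria π^e_1 < … < π^e_k and delimiters δ_1, …, δ_{k−1}, and suppose the joint AA2 maps satisfy the contraction condition |G_A(π,π′) − G_B(π,π′)| ≤ L·|π − π′| for all π ≥ π′ in [0,1] with L ∈ [0,1). Let π_A, π_B : [0,∞) → [0,1] be differentiable solutions of the joint AA2 continuous-time dynamics dπ_A/dt = G_A(π_A, π_B) − π_A, dπ_B/dt = G_B(π_A, π_B) − π_B with π_A(0) ≥ π_B(0), π_A(t) ≥ π_B(t) for all t, π_A(0) ∈ (δ_{j−1}, δ_j) and π_B(0) ∈ (δ_{i−1}, δ_i) with i ≤ j. Then π_A(t) → π^e_j and π_B(t) → π^e_j as t → ∞; in particular, for any g_A ∈ (0,1) and u₁ ≥ 0, the limiting per-step utility u₁·π^e_j of the equalized population is no smaller than the limiting UN utility u₁·(g_A·π^e_j + (1−g_A)·π^e_i). -/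
/-!
The advantaged group evolves autonomously under the UN map, so it converges to the equilibrium
of its own basin. The contraction condition bounds the derivative of the gap `πA - πB ≥ 0`
by `(L - 1)` times the gap, and Grönwall's inequality makes the gap decay like
`exp ((L - 1) t)`; hence the disadvantaged group converges to the same equilibrium. Since the
equilibria increase with their index, the equalized level dominates the UN average.
-/

open Filter Set Topology

theorem le_mul_exp_of_hasDerivWithinAt_le_mul {D D' : ℝ → ℝ} {K : ℝ}
    (hD : ∀ t, 0 ≤ t → HasDerivWithinAt D (D' t) (Ici 0) t)
    (hD' : ∀ t, 0 ≤ t → D' t ≤ K * D t) {t : ℝ} (ht : 0 ≤ t) :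
    D t ≤ D 0 * Real.exp (K * t) := by
  have hcont : ContinuousOn D (Icc 0 t) := fun s hs =>
    ((hD s hs.1).continuousWithinAt).mono Icc_subset_Ici_self
  have hslope : ∀ s ∈ Ico 0 t, ∀ r, D' s < r →
      ∃ᶠ z in 𝓝[>] s, (z - s)⁻¹ * (D z - D s) < r := fun s hs _ hr =>
    ((hD s hs.1).mono (Ici_subset_Ici.2 hs.1)).liminf_right_slope_le hr
  have := le_gronwallBound_of_liminf_deriv_right_le (K := K) (ε := 0) hcont hslope le_rfl
    (fun s hs => (add_zero (K * D s)).symm ▸ hD' s hs.1) t ⟨ht, le_rfl⟩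
  rwa [sub_zero, gronwallBound_ε0] at this

theorem tendsto_zero_of_nonneg_of_hasDerivWithinAt_le_mul {D D' : ℝ → ℝ} {K : ℝ} (hK : K < 0)
    (hnonneg : ∀ t, 0 ≤ t → 0 ≤ D t)
    (hD : ∀ t, 0 ≤ t → HasDerivWithinAt D (D' t) (Ici 0) t)
    (hD' : ∀ t, 0 ≤ t → D' t ≤ K * D t) :
    Tendsto D atTop (𝓝 0) := by
  have hexp : Tendsto (fun t => D 0 * Real.exp (K * t)) atTop (𝓝 0) := by
    simpa using (Real.tendsto_exp_atBot.comp
      (tendsto_id.const_mul_atTop_of_neg hK)).const_mul (D 0)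
  refine tendsto_of_tendsto_of_tendsto_of_le_of_le' tendsto_const_nhds hexp ?_ ?_
  · filter_upwards [eventually_ge_atTop 0] with t ht using hnonneg t ht
  · filter_upwards [eventually_ge_atTop 0] with t ht using
      le_mul_exp_of_hasDerivWithinAt_le_mul hD hD' ht

theorem tendsto_sub_zero_of_contraction {GA GB : ℝ → ℝ → ℝ} {L : ℝ} (hL1 : L < 1)
    (hcontr : ∀ π ∈ Icc (0:ℝ) 1, ∀ π' ∈ Icc (0:ℝ) 1, π' ≤ π →
        |GA π π' - GB π π'| ≤ L * |π - π'|)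
    {πA πB : ℝ → ℝ}
    (hmemA : ∀ t : ℝ, 0 ≤ t → πA t ∈ Icc (0:ℝ) 1)
    (hmemB : ∀ t : ℝ, 0 ≤ t → πB t ∈ Icc (0:ℝ) 1)
    (hodeA : ∀ t : ℝ, 0 ≤ t → HasDerivWithinAt πA (GA (πA t) (πB t) - πA t) (Ici 0) t)
    (hodeB : ∀ t : ℝ, 0 ≤ t → HasDerivWithinAt πB (GB (πA t) (πB t) - πB t) (Ici 0) t)
    (horder : ∀ t : ℝ, 0 ≤ t → πB t ≤ πA t) :
    Tendsto (fun t => πA t - πB t) atTop (𝓝 0) := by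
  refine tendsto_zero_of_nonneg_of_hasDerivWithinAt_le_mul (sub_neg.2 hL1)
    (fun t ht => sub_nonneg.2 (horder t ht)) (fun t ht => (hodeA t ht).sub (hodeB t ht))
    (fun t ht => ?_)
  have h := (le_abs_self _).trans
    (hcontr (πA t) (hmemA t ht) (πB t) (hmemB t ht) (horder t ht))
  rw [abs_of_nonneg (sub_nonneg.2 (horder t ht))] at h
  linarith

theorem AA2_CT_k_equilibrium_better_equilibrium_general
    (f₀ f₁ : ℝ → ℝ → ℝ)
    (f : ℝ → ℝ) (hf : ∀ π, f π = π * f₁ 0 π + (1 - π) * f₀ 0 π)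
    (k : ℕ) (πe : ℕ → ℝ) (δ : ℕ → ℝ)
    (hπe_mono : ∀ i, i + 1 < k → πe i < πe (i + 1))
    -- f is a k-equilibrium continuous-time dynamics
    (hkeq : ∀ i < k, ∀ x : ℝ → ℝ,
        (∀ t : ℝ, 0 ≤ t → x t ∈ Set.Icc (0:ℝ) 1) →
        (∀ t : ℝ, 0 ≤ t → HasDerivWithinAt x (f (x t) - x t) (Set.Ici 0) t) →
        ((δ i < x 0 ∧ x 0 < δ (i + 1)) ∨ (i = 0 ∧ x 0 = 0) ∨ (i = k - 1 ∧ x 0 = 1)) →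
        Filter.Tendsto x Filter.atTop (nhds (πe i)))
    -- AA2 one-step maps
    (GA GB : ℝ → ℝ → ℝ)
    (hGA : ∀ π π', GA π π' = π * f₁ 0 π + (1 - π) * f₀ 0 π)
    -- the AA2 contraction (equalizing) condition
    (L : ℝ) (hL1 : L < 1)
    (hcontr : ∀ π ∈ Set.Icc (0:ℝ) 1, ∀ π' ∈ Set.Icc (0:ℝ) 1, π' ≤ π →
        |GA π π' - GB π π'| ≤ L * |π - π'|)
    -- joint AA2 continuous-time solutions with A advantaged throughout
    (πA πB : ℝ → ℝ)
    (hmemA : ∀ t : ℝ, 0 ≤ t → πA t ∈ Set.Icc (0:ℝ) 1)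
    (hmemB : ∀ t : ℝ, 0 ≤ t → πB t ∈ Set.Icc (0:ℝ) 1)
    (hodeA : ∀ t : ℝ, 0 ≤ t →
        HasDerivWithinAt πA (GA (πA t) (πB t) - πA t) (Set.Ici 0) t)
    (hodeB : ∀ t : ℝ, 0 ≤ t →
        HasDerivWithinAt πB (GB (πA t) (πB t) - πB t) (Set.Ici 0) t)
    (horder : ∀ t : ℝ, 0 ≤ t → πB t ≤ πA t)
    (i j : ℕ) (hij : i ≤ j) (hjk : j < k)
    (hA0 : (δ j < πA 0 ∧ πA 0 < δ (j + 1)) ∨ (j = 0 ∧ πA 0 = 0) ∨ (j = k - 1 ∧ πA 0 = 1)) :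
    Filter.Tendsto πA Filter.atTop (nhds (πe j)) ∧
    Filter.Tendsto πB Filter.atTop (nhds (πe j)) ∧
    ∀ gA u₁ : ℝ, gA ∈ Set.Ioo (0:ℝ) 1 → 0 ≤ u₁ →
      u₁ * (gA * πe j + (1 - gA) * πe i) ≤ u₁ * πe j := by
  have hA : Tendsto πA atTop (𝓝 (πe j)) := by
    refine hkeq j hjk πA hmemA (fun t ht => ?_) hA0
    simpa only [hGA, ← hf] using hodeA t ht
  have hB : Tendsto πB atTop (𝓝 (πe j)) := by
    simpa using
      hA.sub (tendsto_sub_zero_of_contraction hL1 hcontr hmemA hmemB hodeA hodeB horder)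
  have hle : πe i ≤ πe j :=
    (strictMonoOn_Iic_of_lt_succ (n := k - 1) fun m hm => hπe_mono m (by omega)).monotoneOn
      (by rw [mem_Iic]; omega) (by rw [mem_Iic]; omega) hij
  refine ⟨hA, hB, fun gA u₁ hgA hu₁ => ?_⟩
  have := mul_nonneg hu₁ (mul_nonneg (sub_nonneg.2 hgA.2.le) (sub_nonneg.2 hle))
  linarith

/-- Theorem: AA2 equalizes to the higher equilibrium in continuous time.
Indexing is 0-based: the UN map `f(π) = π·f₁(0,π) + (1−π)·f₀(0,π)` is a k-equilibrium
continuous-time dynamics with equilibria `πe 0 < … < πe (k−1)` and delimiters `δ 0 = 0`,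
`δ i ∈ (πe (i−1), πe i)`, `δ k = 1`. If the AA2 maps `G_A(π,π') = π·f₁(0,π)+(1−π)·f₀(0,π)`,
`G_B(π,π') = π'·f₁(π−π',π')+(1−π')·f₀(π−π',π')` satisfy the contraction condition with
`L ∈ [0,1)`, and `π_A, π_B` solve the joint AA2 continuous-time dynamics with `π_A` always
advantaged, `π_A(0)` in basin `j` and `π_B(0)` in basin `i`, `i ≤ j`, then both groups
converge to `πe j`; in particular the limiting per-step utility of the equalized population
is no smaller than the limiting UN utility. -/
theorem AA2_CT_k_equilibrium_better_equilibrium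
    (f₀ f₁ : ℝ → ℝ → ℝ)
    (hmap0 : ∀ x ∈ Set.Icc (0:ℝ) 1, ∀ y ∈ Set.Icc (0:ℝ) 1, f₀ x y ∈ Set.Icc (0:ℝ) 1)
    (hmap1 : ∀ x ∈ Set.Icc (0:ℝ) 1, ∀ y ∈ Set.Icc (0:ℝ) 1, f₁ x y ∈ Set.Icc (0:ℝ) 1)
    (f : ℝ → ℝ) (hf : ∀ π, f π = π * f₁ 0 π + (1 - π) * f₀ 0 π)
    (k : ℕ) (hk : 0 < k) (πe : ℕ → ℝ) (δ : ℕ → ℝ)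
    (hπe_mem : ∀ i < k, πe i ∈ Set.Icc (0:ℝ) 1)
    (hπe_mono : ∀ i, i + 1 < k → πe i < πe (i + 1))
    (hδ0 : δ 0 = 0) (hδk : δ k = 1)
    (hδ : ∀ i, 0 < i → i < k → πe (i - 1) < δ i ∧ δ i < πe i)
    -- f is a k-equilibrium continuous-time dynamics
    (hkeq : ∀ i < k, ∀ x : ℝ → ℝ,
        (∀ t : ℝ, 0 ≤ t → x t ∈ Set.Icc (0:ℝ) 1) →
        (∀ t : ℝ, 0 ≤ t → HasDerivWithinAt x (f (x t) - x t) (Set.Ici 0) t) →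
        ((δ i < x 0 ∧ x 0 < δ (i + 1)) ∨ (i = 0 ∧ x 0 = 0) ∨ (i = k - 1 ∧ x 0 = 1)) →
        Filter.Tendsto x Filter.atTop (nhds (πe i)))
    -- AA2 one-step maps
    (GA GB : ℝ → ℝ → ℝ)
    (hGA : ∀ π π', GA π π' = π * f₁ 0 π + (1 - π) * f₀ 0 π)
    (hGB : ∀ π π', GB π π' = π' * f₁ (π - π') π' + (1 - π') * f₀ (π - π') π')
    -- the AA2 contraction (equalizing) condition
    (L : ℝ) (hL0 : 0 ≤ L) (hL1 : L < 1)
    (hcontr : ∀ π ∈ Set.Icc (0:ℝ) 1, ∀ π' ∈ Set.Icc (0:ℝ) 1, π' ≤ π →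
        |GA π π' - GB π π'| ≤ L * |π - π'|)
    -- joint AA2 continuous-time solutions with A advantaged throughout
    (πA πB : ℝ → ℝ)
    (hmemA : ∀ t : ℝ, 0 ≤ t → πA t ∈ Set.Icc (0:ℝ) 1)
    (hmemB : ∀ t : ℝ, 0 ≤ t → πB t ∈ Set.Icc (0:ℝ) 1)
    (hodeA : ∀ t : ℝ, 0 ≤ t →
        HasDerivWithinAt πA (GA (πA t) (πB t) - πA t) (Set.Ici 0) t)
    (hodeB : ∀ t : ℝ, 0 ≤ t →
        HasDerivWithinAt πB (GB (πA t) (πB t) - πB t) (Set.Ici 0) t)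
    (horder : ∀ t : ℝ, 0 ≤ t → πB t ≤ πA t)
    (i j : ℕ) (hij : i ≤ j) (hjk : j < k)
    (hA0 : (δ j < πA 0 ∧ πA 0 < δ (j + 1)) ∨ (j = 0 ∧ πA 0 = 0) ∨ (j = k - 1 ∧ πA 0 = 1))
    (hB0 : (δ i < πB 0 ∧ πB 0 < δ (i + 1)) ∨ (i = 0 ∧ πB 0 = 0) ∨ (i = k - 1 ∧ πB 0 = 1)) :
    Filter.Tendsto πA Filter.atTop (nhds (πe j)) ∧
    Filter.Tendsto πB Filter.atTop (nhds (πe j)) ∧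
    ∀ gA u₁ : ℝ, gA ∈ Set.Ioo (0:ℝ) 1 → 0 ≤ u₁ →
      u₁ * (gA * πe j + (1 - gA) * πe i) ≤ u₁ * πe j :=
  AA2_CT_k_equilibrium_better_equilibrium_general f₀ f₁ f hf k πe δ hπe_mono hkeq GA GB hGA L hL1
    hcontr πA πB hmemA hmemB hodeA hodeB horder i j hij hjk hA0
end
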